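/- Let M > 0 and Λ > 0 with 9ΛM² < 1, and write S := √(1 − 9ΛM²). Define r_poly(a) := 3M − (2/√3)·S·a − (3ΛM + 2/(9M))·a², β_poly(a) := 3√3·M/S − ((2 + 9ΛM²)/S²)·a + (√3·(45ΛM² − 1)/(6·M·S³))·a², and R''(r, β, a) := 12r² + 4a² − 4aβ − (2 − 4Λr² − (2Λ/3)a²)·(β − a)². Then, as a → 0, R''(r_poly(a), β_poly(a), a) − (54M²/S² − (12√3·M·(2 + 9ΛM²)/S³)·a + (18ΛM²·(20 + 9ΛM²)/S⁴)·a²) = O(a³). -/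
import Mathlib


open Asymptotics

set_option maxRecDepth 100000
set_option maxHeartbeats 4000000

/-- `S = √(1 - 9ΛM²)`. -/
noncomputable def S (M Λ : ℝ) : ℝ := Real.sqrt (1 - 9 * Λ * M ^ 2)

/-- Quadratic truncation of the co-rotating photon-orbit radius:
`r_poly(a) = 3M - (2/√3)·S·a - (3ΛM + 2/(9M))·a²`. -/
noncomputable def rpoly (M Λ a : ℝ) : ℝ :=
  3 * M - (2 / Real.sqrt 3) * S M Λ * a - (3 * Λ * M + 2 / (9 * M)) * a ^ 2

/-- Quadratic truncation of the Ξ-corrected impact parameter `Ξ(a)b₊(a)`: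
`β_poly(a) = 3√3·M/S - ((2 + 9ΛM²)/S²)·a + (√3·(45ΛM² - 1)/(6MS³))·a²`. -/
noncomputable def βpoly (M Λ a : ℝ) : ℝ :=
  3 * Real.sqrt 3 * M / S M Λ - ((2 + 9 * Λ * M ^ 2) / (S M Λ) ^ 2) * a +
    (Real.sqrt 3 * (45 * Λ * M ^ 2 - 1) / (6 * M * (S M Λ) ^ 3)) * a ^ 2

/-- Second radial derivative of the equatorial Carter potential:
`R''(r, β, a) = 12r² + 4a² - 4aβ - (2 - 4Λr² - (2Λ/3)a²)·(β - a)²`. -/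
noncomputable def Rpp (Λ r β a : ℝ) : ℝ :=
  12 * r ^ 2 + 4 * a ^ 2 - 4 * a * β -
    (2 - 4 * Λ * r ^ 2 - (2 * Λ / 3) * a ^ 2) * (β - a) ^ 2


set_option maxHeartbeats 4000000 in
private lemma aux16a (m l t s a : ℝ) (hm : m ≠ 0) (ht0 : t ≠ 0) (hs0 : s ≠ 0) :
    (12 * (3*m - (2/t)*s*a - (3*l*m + 2/(9*m))*a^2) ^ 2 + 4 * a ^ 2
      - 4 * a * (3*t*m/s - ((2 + 9*l*m^2)/s^2)*a + (t*(45*l*m^2 - 1)/(6*m*s^3))*a^2)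
      - (2 - 4 * l * (3*m - (2/t)*s*a - (3*l*m + 2/(9*m))*a^2) ^ 2 - (2*l/3)*a^2)
        * ((3*t*m/s - ((2 + 9*l*m^2)/s^2)*a + (t*(45*l*m^2 - 1)/(6*m*s^3))*a^2) - a) ^ 2)
      - (54*m^2/s^2 - (12*t*m*(2 + 9*l*m^2)/s^3)*a + (18*l*m^2*(20 + 9*l*m^2)/s^4)*a^2)
      = ((8:ℝ)*l*t^4*a^8 + (336:ℝ)*m*l*t^3*s*a^7 + (96:ℝ)*m*l*t^3*s^3*a^7 + (864:ℝ)*m^2*t^2*s^6*a^4 + (-81:ℝ)*m^2*t^4*a^4 + (5256:ℝ)*m^2*l*t^2*s^2*a^6 + (2880:ℝ)*m^2*l*t^2*s^4*a^6 + (288:ℝ)*m^2*l*t^2*s^6*a^6 + (-189:ℝ)*m^2*l*t^4*a^6 + (-288:ℝ)*m^2*l*t^4*s^2*a^6 + (-504:ℝ)*m^2*l^2*t^4*a^8 + (15552:ℝ)*m^3*t*s^7*a^3 + (-1944:ℝ)*m^3*t^3*s*a^3 + (36288:ℝ)*m^3*l*t*s^3*a^5 + (28512:ℝ)*m^3*l*t*s^5*a^5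 + (5184:ℝ)*m^3*l*t*s^7*a^5 + (-6480:ℝ)*m^3*l*t^3*s*a^5 + (-10908:ℝ)*m^3*l*t^3*s^3*a^5 + (-1728:ℝ)*m^3*l*t^3*s^5*a^5 + (-13608:ℝ)*m^3*l^2*t^3*s*a^7 + (-1728:ℝ)*m^3*l^2*t^3*s^3*a^7 + (69984:ℝ)*m^4*s^8*a^2 + (-11664:ℝ)*m^4*t^2*s^2*a^2 + (-20412:ℝ)*m^4*t^2*s^6*a^2 + (2916:ℝ)*m^4*t^4*s^2*a^2 + (93312:ℝ)*m^4*l*s^4*a^4 + (93312:ℝ)*m^4*l*s^6*a^4 + (23328:ℝ)*m^4*l*s^8*a^4 + (-73872:ℝ)*m^4*l*t^2*s^2*a^4 + (-136080:ℝ)*m^4*l*t^2*s^4*a^4 + (-14580:ℝ)*m^4*l*t^2*s^6*a^4 + (8748:ℝ)*m^4*l*t^4*a^4 + (6804:ℝ)*m^4*l*t^4*s^2*a^4 + (2592:ℝ)*m^4*l*t^4*s^4*a^4 + (-110160:ℝ)*m^4*l^2*t^2*s^2*a^6 + (-18144:ℝ)*m^4*l^2*t^2*s^4*a^6 + (7776:ℝ)*m^4*l^2*t^2*s^6*a^6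 + (14094:ℝ)*m^4*l^2*t^4*a^6 + (5184:ℝ)*m^4*l^2*t^4*s^2*a^6 + (-1782:ℝ)*m^4*l^3*t^4*a^8 + (-209952:ℝ)*m^5*t*s^7*a + (69984:ℝ)*m^5*t^3*s^3*a + (-279936:ℝ)*m^5*l*t*s^3*a^3 + (-559872:ℝ)*m^5*l*t*s^5*a^3 + (113724:ℝ)*m^5*l*t^3*s*a^3 + (169128:ℝ)*m^5*l*t^3*s^3*a^3 + (87480:ℝ)*m^5*l*t^3*s^5*a^3 + (-163296:ℝ)*m^5*l^2*t*s^3*a^5 + (23328:ℝ)*m^5*l^2*t*s^5*a^5 + (69984:ℝ)*m^5*l^2*t*s^7*a^5 + (288684:ℝ)*m^5*l^2*t^3*s*a^5 + (121500:ℝ)*m^5*l^2*t^3*s^3*a^5 + (-46656:ℝ)*m^5*l^2*t^3*s^5*a^5 + (-97200:ℝ)*m^5*l^3*t^3*s*a^7 + (-99144:ℝ)*m^5*l^3*t^3*s^3*a^7 + (-78732:ℝ)*m^6*t^2*s^4 + (157464:ℝ)*m^6*t^2*s^6 + (-26244:ℝ)*m^6*t^4*s^4 + (-419904:ℝ)*m^6*l*t^2*s^2*a^2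 + (1049760:ℝ)*m^6*l*t^2*s^4*a^2 + (367416:ℝ)*m^6*l*t^2*s^6*a^2 + (-183708:ℝ)*m^6*l*t^4*s^2*a^2 + (-61236:ℝ)*m^6*l*t^4*s^4*a^2 + (839808:ℝ)*m^6*l^2*s^4*a^4 + (419904:ℝ)*m^6*l^2*s^6*a^4 + (1224720:ℝ)*m^6*l^2*t^2*s^2*a^4 + (437400:ℝ)*m^6*l^2*t^2*s^4*a^4 + (-367416:ℝ)*m^6*l^2*t^2*s^6*a^4 + (-295245:ℝ)*m^6*l^2*t^4*a^4 + (-201204:ℝ)*m^6*l^2*t^4*s^2*a^4 + (69984:ℝ)*m^6*l^2*t^4*s^4*a^4 + (-763992:ℝ)*m^6*l^3*t^2*s^2*a^6 + (-699840:ℝ)*m^6*l^3*t^2*s^4*a^6 + (52488:ℝ)*m^6*l^3*t^2*s^6*a^6 + (-120285:ℝ)*m^6*l^3*t^4*a^6 + (297432:ℝ)*m^6*l^3*t^4*s^2*a^6 + (306180:ℝ)*m^6*l^4*t^4*a^8 + (-314928:ℝ)*m^7*l*t^3*s^3*a + (-944784:ℝ)*m^7*l*t^3*s^5*a + (-2519424:ℝ)*m^7*l^2*t*s^3*a^3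 + (-2519424:ℝ)*m^7*l^2*t*s^5*a^3 + (-1023516:ℝ)*m^7*l^2*t^3*s*a^3 + (-2309472:ℝ)*m^7*l^2*t^3*s^3*a^3 + (1259712:ℝ)*m^7*l^2*t^3*s^5*a^3 + (-209952:ℝ)*m^7*l^3*t*s^3*a^5 + (1259712:ℝ)*m^7*l^3*t*s^5*a^5 + (-183708:ℝ)*m^7*l^3*t^3*s*a^5 + (3674160:ℝ)*m^7*l^3*t^3*s^3*a^5 + (-314928:ℝ)*m^7*l^3*t^3*s^5*a^5 + (1469664:ℝ)*m^7*l^4*t^3*s*a^7 + (-787320:ℝ)*m^7*l^4*t^3*s^3*a^7 + (472392:ℝ)*m^8*l*t^4*s^4 + (1417176:ℝ)*m^8*l^2*t^2*s^2*a^2 + (4723920:ℝ)*m^8*l^2*t^2*s^4*a^2 + (2361960:ℝ)*m^8*l^2*t^4*s^2*a^2 + (-944784:ℝ)*m^8*l^2*t^4*s^4*a^2 + (1889568:ℝ)*m^8*l^3*s^4*a^4 + (5117580:ℝ)*m^8*l^3*t^2*s^2*a^4 + (-5668704:ℝ)*m^8*l^3*t^2*s^4*a^4 + (2952450:ℝ)*m^8*l^3*t^4*a^4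 + (-4723920:ℝ)*m^8*l^3*t^4*s^2*a^4 + (472392:ℝ)*m^8*l^3*t^4*s^4*a^4 + (-6928416:ℝ)*m^8*l^4*t^2*s^2*a^6 + (944784:ℝ)*m^8*l^4*t^2*s^4*a^6 + (-5904900:ℝ)*m^8*l^4*t^4*a^6 + (2361960:ℝ)*m^8*l^4*t^4*s^2*a^6 + (2952450:ℝ)*m^8*l^5*t^4*a^8 + (-2834352:ℝ)*m^9*l^2*t^3*s^3*a + (-5668704:ℝ)*m^9*l^3*t*s^3*a^3 + (-7085880:ℝ)*m^9*l^3*t^3*s*a^3 + (5668704:ℝ)*m^9*l^3*t^3*s^3*a^3 + (5668704:ℝ)*m^9*l^4*t*s^3*a^5 + (14171760:ℝ)*m^9*l^4*t^3*s*a^5 + (-2834352:ℝ)*m^9*l^4*t^3*s^3*a^5 + (-7085880:ℝ)*m^9*l^5*t^3*s*a^7 + (4251528:ℝ)*m^10*l^3*t^2*s^2*a^2 + (-8503056:ℝ)*m^10*l^4*t^2*s^2*a^4 + (4251528:ℝ)*m^10*l^5*t^2*s^2*a^6) / ((1458:ℝ)*m^4*t^2*s^6) := by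
  field_simp
  ring

set_option maxHeartbeats 4000000 in
private lemma aux16b (m l t s a : ℝ) (ht2 : t^2 = 3) (hs2 : s^2 = 1 - 9*l*m^2) :
    ((8:ℝ)*l*t^4*a^8 + (336:ℝ)*m*l*t^3*s*a^7 + (96:ℝ)*m*l*t^3*s^3*a^7 + (864:ℝ)*m^2*t^2*s^6*a^4 + (-81:ℝ)*m^2*t^4*a^4 + (5256:ℝ)*m^2*l*t^2*s^2*a^6 + (2880:ℝ)*m^2*l*t^2*s^4*a^6 + (288:ℝ)*m^2*l*t^2*s^6*a^6 + (-189:ℝ)*m^2*l*t^4*a^6 + (-288:ℝ)*m^2*l*t^4*s^2*a^6 + (-504:ℝ)*m^2*l^2*t^4*a^8 + (15552:ℝ)*m^3*t*s^7*a^3 + (-1944:ℝ)*m^3*t^3*s*a^3 + (36288:ℝ)*m^3*l*t*s^3*a^5 + (28512:ℝ)*m^3*l*t*s^5*a^5 + (5184:ℝ)*m^3*l*t*s^7*a^5 + (-6480:ℝ)*m^3*l*t^3*s*a^5 + (-10908:ℝ)*m^3*l*t^3*s^3*a^5 + (-1728:ℝ)*m^3*l*t^3*s^5*a^5 + (-13608:ℝ)*m^3*l^2*t^3*s*a^7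 + (-1728:ℝ)*m^3*l^2*t^3*s^3*a^7 + (69984:ℝ)*m^4*s^8*a^2 + (-11664:ℝ)*m^4*t^2*s^2*a^2 + (-20412:ℝ)*m^4*t^2*s^6*a^2 + (2916:ℝ)*m^4*t^4*s^2*a^2 + (93312:ℝ)*m^4*l*s^4*a^4 + (93312:ℝ)*m^4*l*s^6*a^4 + (23328:ℝ)*m^4*l*s^8*a^4 + (-73872:ℝ)*m^4*l*t^2*s^2*a^4 + (-136080:ℝ)*m^4*l*t^2*s^4*a^4 + (-14580:ℝ)*m^4*l*t^2*s^6*a^4 + (8748:ℝ)*m^4*l*t^4*a^4 + (6804:ℝ)*m^4*l*t^4*s^2*a^4 + (2592:ℝ)*m^4*l*t^4*s^4*a^4 + (-110160:ℝ)*m^4*l^2*t^2*s^2*a^6 + (-18144:ℝ)*m^4*l^2*t^2*s^4*a^6 + (7776:ℝ)*m^4*l^2*t^2*s^6*a^6 + (14094:ℝ)*m^4*l^2*t^4*a^6 + (5184:ℝ)*m^4*l^2*t^4*s^2*a^6 + (-1782:ℝ)*m^4*l^3*t^4*a^8 + (-209952:ℝ)*m^5*t*s^7*a + (69984:ℝ)*m^5*t^3*s^3*a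 + (-279936:ℝ)*m^5*l*t*s^3*a^3 + (-559872:ℝ)*m^5*l*t*s^5*a^3 + (113724:ℝ)*m^5*l*t^3*s*a^3 + (169128:ℝ)*m^5*l*t^3*s^3*a^3 + (87480:ℝ)*m^5*l*t^3*s^5*a^3 + (-163296:ℝ)*m^5*l^2*t*s^3*a^5 + (23328:ℝ)*m^5*l^2*t*s^5*a^5 + (69984:ℝ)*m^5*l^2*t*s^7*a^5 + (288684:ℝ)*m^5*l^2*t^3*s*a^5 + (121500:ℝ)*m^5*l^2*t^3*s^3*a^5 + (-46656:ℝ)*m^5*l^2*t^3*s^5*a^5 + (-97200:ℝ)*m^5*l^3*t^3*s*a^7 + (-99144:ℝ)*m^5*l^3*t^3*s^3*a^7 + (-78732:ℝ)*m^6*t^2*s^4 + (157464:ℝ)*m^6*t^2*s^6 + (-26244:ℝ)*m^6*t^4*s^4 + (-419904:ℝ)*m^6*l*t^2*s^2*a^2 + (1049760:ℝ)*m^6*l*t^2*s^4*a^2 + (367416:ℝ)*m^6*l*t^2*s^6*a^2 + (-183708:ℝ)*m^6*l*t^4*s^2*a^2 + (-61236:ℝ)*m^6*l*t^4*s^4*a^2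 + (839808:ℝ)*m^6*l^2*s^4*a^4 + (419904:ℝ)*m^6*l^2*s^6*a^4 + (1224720:ℝ)*m^6*l^2*t^2*s^2*a^4 + (437400:ℝ)*m^6*l^2*t^2*s^4*a^4 + (-367416:ℝ)*m^6*l^2*t^2*s^6*a^4 + (-295245:ℝ)*m^6*l^2*t^4*a^4 + (-201204:ℝ)*m^6*l^2*t^4*s^2*a^4 + (69984:ℝ)*m^6*l^2*t^4*s^4*a^4 + (-763992:ℝ)*m^6*l^3*t^2*s^2*a^6 + (-699840:ℝ)*m^6*l^3*t^2*s^4*a^6 + (52488:ℝ)*m^6*l^3*t^2*s^6*a^6 + (-120285:ℝ)*m^6*l^3*t^4*a^6 + (297432:ℝ)*m^6*l^3*t^4*s^2*a^6 + (306180:ℝ)*m^6*l^4*t^4*a^8 + (-314928:ℝ)*m^7*l*t^3*s^3*a + (-944784:ℝ)*m^7*l*t^3*s^5*a + (-2519424:ℝ)*m^7*l^2*t*s^3*a^3 + (-2519424:ℝ)*m^7*l^2*t*s^5*a^3 + (-1023516:ℝ)*m^7*l^2*t^3*s*a^3 + (-2309472:ℝ)*m^7*l^2*t^3*s^3*a^3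 + (1259712:ℝ)*m^7*l^2*t^3*s^5*a^3 + (-209952:ℝ)*m^7*l^3*t*s^3*a^5 + (1259712:ℝ)*m^7*l^3*t*s^5*a^5 + (-183708:ℝ)*m^7*l^3*t^3*s*a^5 + (3674160:ℝ)*m^7*l^3*t^3*s^3*a^5 + (-314928:ℝ)*m^7*l^3*t^3*s^5*a^5 + (1469664:ℝ)*m^7*l^4*t^3*s*a^7 + (-787320:ℝ)*m^7*l^4*t^3*s^3*a^7 + (472392:ℝ)*m^8*l*t^4*s^4 + (1417176:ℝ)*m^8*l^2*t^2*s^2*a^2 + (4723920:ℝ)*m^8*l^2*t^2*s^4*a^2 + (2361960:ℝ)*m^8*l^2*t^4*s^2*a^2 + (-944784:ℝ)*m^8*l^2*t^4*s^4*a^2 + (1889568:ℝ)*m^8*l^3*s^4*a^4 + (5117580:ℝ)*m^8*l^3*t^2*s^2*a^4 + (-5668704:ℝ)*m^8*l^3*t^2*s^4*a^4 + (2952450:ℝ)*m^8*l^3*t^4*a^4 + (-4723920:ℝ)*m^8*l^3*t^4*s^2*a^4 + (472392:ℝ)*m^8*l^3*t^4*s^4*a^4 + (-6928416:ℝ)*m^8*l^4*t^2*s^2*a^6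 + (944784:ℝ)*m^8*l^4*t^2*s^4*a^6 + (-5904900:ℝ)*m^8*l^4*t^4*a^6 + (2361960:ℝ)*m^8*l^4*t^4*s^2*a^6 + (2952450:ℝ)*m^8*l^5*t^4*a^8 + (-2834352:ℝ)*m^9*l^2*t^3*s^3*a + (-5668704:ℝ)*m^9*l^3*t*s^3*a^3 + (-7085880:ℝ)*m^9*l^3*t^3*s*a^3 + (5668704:ℝ)*m^9*l^3*t^3*s^3*a^3 + (5668704:ℝ)*m^9*l^4*t*s^3*a^5 + (14171760:ℝ)*m^9*l^4*t^3*s*a^5 + (-2834352:ℝ)*m^9*l^4*t^3*s^3*a^5 + (-7085880:ℝ)*m^9*l^5*t^3*s*a^7 + (4251528:ℝ)*m^10*l^3*t^2*s^2*a^2 + (-8503056:ℝ)*m^10*l^4*t^2*s^2*a^4 + (4251528:ℝ)*m^10*l^5*t^2*s^2*a^6) = a^3 * ((72:ℝ)*l*a^5 + (1296:ℝ)*m*l*t*s*a^4 + (1863:ℝ)*m^2*a + (20979:ℝ)*m^2*l*a^3 + (-4536:ℝ)*m^2*l^2*a^5 + (9720:ℝ)*m^3*t*s + (12636:ℝ)*m^3*l*t*s*a^2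 + (-48600:ℝ)*m^3*l^2*t*s*a^4 + (-370332:ℝ)*m^4*l*a + (-485514:ℝ)*m^4*l^2*a^3 + (-16038:ℝ)*m^4*l^3*a^5 + (-148716:ℝ)*m^5*l*t*s + (428652:ℝ)*m^5*l^2*t*s*a^2 + (-542376:ℝ)*m^5*l^3*t*s*a^4 + (6449463:ℝ)*m^6*l^2*a + (1174419:ℝ)*m^6*l^3*a^3 + (2755620:ℝ)*m^6*l^4*a^5 + (-4172796:ℝ)*m^7*l^2*t*s + (12124728:ℝ)*m^7*l^3*t*s*a^2 + (4723920:ℝ)*m^7*l^4*t*s*a^4 + (-62001450:ℝ)*m^8*l^3*a + (-19131876:ℝ)*m^8*l^4*a^3 + (26572050:ℝ)*m^8*l^5*a^5 + (17006112:ℝ)*m^9*l^3*t*s + (-59521392:ℝ)*m^9*l^4*t*s*a^2 + (369882936:ℝ)*m^10*l^4*a + (-191318760:ℝ)*m^10*l^5*a^3) := by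
  linear_combination (((24:ℝ)*l*a^8 + (8:ℝ)*l*t^2*a^8 + (336:ℝ)*m*l*t*s*a^7 + (96:ℝ)*m*l*t*s^3*a^7 + (-243:ℝ)*m^2*a^4 + (864:ℝ)*m^2*s^6*a^4 + (-81:ℝ)*m^2*t^2*a^4 + (-567:ℝ)*m^2*l*a^6 + (4392:ℝ)*m^2*l*s^2*a^6 + (2880:ℝ)*m^2*l*s^4*a^6 + (288:ℝ)*m^2*l*s^6*a^6 + (-189:ℝ)*m^2*l*t^2*a^6 + (-288:ℝ)*m^2*l*t^2*s^2*a^6 + (-1512:ℝ)*m^2*l^2*a^8 + (-504:ℝ)*m^2*l^2*t^2*a^8 + (-1944:ℝ)*m^3*t*s*a^3 + (-6480:ℝ)*m^3*l*t*s*a^5 + (-10908:ℝ)*m^3*l*t*s^3*a^5 + (-1728:ℝ)*m^3*l*t*s^5*a^5 + (-13608:ℝ)*m^3*l^2*t*s*a^7 + (-1728:ℝ)*m^3*l^2*t*s^3*a^7 + (-2916:ℝ)*m^4*s^2*a^2 + (-20412:ℝ)*m^4*s^6*a^2 + (2916:ℝ)*m^4*t^2*s^2*a^2 + (26244:ℝ)*m^4*l*a^4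 + (-53460:ℝ)*m^4*l*s^2*a^4 + (-128304:ℝ)*m^4*l*s^4*a^4 + (-14580:ℝ)*m^4*l*s^6*a^4 + (8748:ℝ)*m^4*l*t^2*a^4 + (6804:ℝ)*m^4*l*t^2*s^2*a^4 + (2592:ℝ)*m^4*l*t^2*s^4*a^4 + (42282:ℝ)*m^4*l^2*a^6 + (-94608:ℝ)*m^4*l^2*s^2*a^6 + (-18144:ℝ)*m^4*l^2*s^4*a^6 + (7776:ℝ)*m^4*l^2*s^6*a^6 + (14094:ℝ)*m^4*l^2*t^2*a^6 + (5184:ℝ)*m^4*l^2*t^2*s^2*a^6 + (-5346:ℝ)*m^4*l^3*a^8 + (-1782:ℝ)*m^4*l^3*t^2*a^8 + (69984:ℝ)*m^5*t*s^3*a + (113724:ℝ)*m^5*l*t*s*a^3 + (169128:ℝ)*m^5*l*t*s^3*a^3 + (87480:ℝ)*m^5*l*t*s^5*a^3 + (288684:ℝ)*m^5*l^2*t*s*a^5 + (121500:ℝ)*m^5*l^2*t*s^3*a^5 + (-46656:ℝ)*m^5*l^2*t*s^5*a^5 + (-97200:ℝ)*m^5*l^3*t*s*a^7 + (-99144:ℝ)*m^5*l^3*t*s^3*a^7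 + (-157464:ℝ)*m^6*s^4 + (157464:ℝ)*m^6*s^6 + (-26244:ℝ)*m^6*t^2*s^4 + (-971028:ℝ)*m^6*l*s^2*a^2 + (866052:ℝ)*m^6*l*s^4*a^2 + (367416:ℝ)*m^6*l*s^6*a^2 + (-183708:ℝ)*m^6*l*t^2*s^2*a^2 + (-61236:ℝ)*m^6*l*t^2*s^4*a^2 + (-885735:ℝ)*m^6*l^2*a^4 + (621108:ℝ)*m^6*l^2*s^2*a^4 + (647352:ℝ)*m^6*l^2*s^4*a^4 + (-367416:ℝ)*m^6*l^2*s^6*a^4 + (-295245:ℝ)*m^6*l^2*t^2*a^4 + (-201204:ℝ)*m^6*l^2*t^2*s^2*a^4 + (69984:ℝ)*m^6*l^2*t^2*s^4*a^4 + (-360855:ℝ)*m^6*l^3*a^6 + (128304:ℝ)*m^6*l^3*s^2*a^6 + (-699840:ℝ)*m^6*l^3*s^4*a^6 + (52488:ℝ)*m^6*l^3*s^6*a^6 + (-120285:ℝ)*m^6*l^3*t^2*a^6 + (297432:ℝ)*m^6*l^3*t^2*s^2*a^6 + (918540:ℝ)*m^6*l^4*a^8 + (306180:ℝ)*m^6*l^4*t^2*a^8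 + (-314928:ℝ)*m^7*l*t*s^3*a + (-944784:ℝ)*m^7*l*t*s^5*a + (-1023516:ℝ)*m^7*l^2*t*s*a^3 + (-2309472:ℝ)*m^7*l^2*t*s^3*a^3 + (1259712:ℝ)*m^7*l^2*t*s^5*a^3 + (-183708:ℝ)*m^7*l^3*t*s*a^5 + (3674160:ℝ)*m^7*l^3*t*s^3*a^5 + (-314928:ℝ)*m^7*l^3*t*s^5*a^5 + (1469664:ℝ)*m^7*l^4*t*s*a^7 + (-787320:ℝ)*m^7*l^4*t*s^3*a^7 + (1417176:ℝ)*m^8*l*s^4 + (472392:ℝ)*m^8*l*t^2*s^4 + (8503056:ℝ)*m^8*l^2*s^2*a^2 + (1889568:ℝ)*m^8*l^2*s^4*a^2 + (2361960:ℝ)*m^8*l^2*t^2*s^2*a^2 + (-944784:ℝ)*m^8*l^2*t^2*s^4*a^2 + (8857350:ℝ)*m^8*l^3*a^4 + (-9054180:ℝ)*m^8*l^3*s^2*a^4 + (-4251528:ℝ)*m^8*l^3*s^4*a^4 + (2952450:ℝ)*m^8*l^3*t^2*a^4 + (-4723920:ℝ)*m^8*l^3*t^2*s^2*a^4 + (472392:ℝ)*m^8*l^3*t^2*s^4*a^4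 + (-17714700:ℝ)*m^8*l^4*a^6 + (157464:ℝ)*m^8*l^4*s^2*a^6 + (944784:ℝ)*m^8*l^4*s^4*a^6 + (-5904900:ℝ)*m^8*l^4*t^2*a^6 + (2361960:ℝ)*m^8*l^4*t^2*s^2*a^6 + (8857350:ℝ)*m^8*l^5*a^8 + (2952450:ℝ)*m^8*l^5*t^2*a^8 + (-2834352:ℝ)*m^9*l^2*t*s^3*a + (-7085880:ℝ)*m^9*l^3*t*s*a^3 + (5668704:ℝ)*m^9*l^3*t*s^3*a^3 + (14171760:ℝ)*m^9*l^4*t*s*a^5 + (-2834352:ℝ)*m^9*l^4*t*s^3*a^5 + (-7085880:ℝ)*m^9*l^5*t*s*a^7 + (4251528:ℝ)*m^10*l^3*s^2*a^2 + (-8503056:ℝ)*m^10*l^4*s^2*a^4 + (4251528:ℝ)*m^10*l^5*s^2*a^6)) * ht2 + (((288:ℝ)*m*l*t*s*a^7 + (2592:ℝ)*m^2*a^4 + (2592:ℝ)*m^2*s^2*a^4 + (2592:ℝ)*m^2*s^4*a^4 + (22680:ℝ)*m^2*l*a^6 + (9504:ℝ)*m^2*l*s^2*a^6 + (864:ℝ)*m^2*l*s^4*a^6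 + (15552:ℝ)*m^3*t*s*a^3 + (15552:ℝ)*m^3*t*s^3*a^3 + (15552:ℝ)*m^3*t*s^5*a^3 + (32076:ℝ)*m^3*l*t*s*a^5 + (28512:ℝ)*m^3*l*t*s^3*a^5 + (5184:ℝ)*m^3*l*t*s^5*a^5 + (-5184:ℝ)*m^3*l^2*t*s*a^7 + (8748:ℝ)*m^4*s^2*a^2 + (8748:ℝ)*m^4*s^4*a^2 + (69984:ℝ)*m^4*s^6*a^2 + (-425736:ℝ)*m^4*l*a^4 + (-242028:ℝ)*m^4*l*s^2*a^4 + (72900:ℝ)*m^4*l*s^4*a^4 + (23328:ℝ)*m^4*l*s^6*a^4 + (-408240:ℝ)*m^4*l^2*a^6 + (-38880:ℝ)*m^4*l^2*s^2*a^6 + (23328:ℝ)*m^4*l^2*s^4*a^6 + (-209952:ℝ)*m^5*t*s^3*a + (-209952:ℝ)*m^5*t*s^5*a + (-349920:ℝ)*m^5*l*t*s*a^3 + (-437400:ℝ)*m^5*l*t*s^3*a^3 + (-148716:ℝ)*m^5*l^2*t*s*a^5 + (-93312:ℝ)*m^5*l^2*t*s^3*a^5 + (69984:ℝ)*m^5*l^2*t*s^5*a^5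 + (-297432:ℝ)*m^5*l^3*t*s*a^7 + (472392:ℝ)*m^6*s^4 + (2991816:ℝ)*m^6*l*s^2*a^2 + (472392:ℝ)*m^6*l*s^4*a^2 + (5275044:ℝ)*m^6*l^2*a^4 + (1233468:ℝ)*m^6*l^2*s^2*a^4 + (-892296:ℝ)*m^6*l^2*s^4*a^4 + (-1417176:ℝ)*m^6*l^3*a^6 + (-2152008:ℝ)*m^6*l^3*s^2*a^6 + (157464:ℝ)*m^6*l^3*s^4*a^6 + (-944784:ℝ)*m^7*l*t*s^3*a + (-4251528:ℝ)*m^7*l^2*t*s*a^3 + (1259712:ℝ)*m^7*l^2*t*s^3*a^3 + (11337408:ℝ)*m^7*l^3*t*s*a^5 + (-314928:ℝ)*m^7*l^3*t*s^3*a^5 + (-2361960:ℝ)*m^7*l^4*t*s*a^7 + (1417176:ℝ)*m^8*l^2*s^2*a^2 + (-41098104:ℝ)*m^8*l^3*a^4 + (-2834352:ℝ)*m^8*l^3*s^2*a^4 + (21257640:ℝ)*m^8*l^4*a^6 + (1417176:ℝ)*m^8*l^4*s^2*a^6)) * hs2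

set_option maxHeartbeats 4000000 in
private lemma aux16 (m l t s a : ℝ) (hm : m ≠ 0) (ht0 : t ≠ 0) (hs0 : s ≠ 0)
    (ht2 : t^2 = 3) (hs2 : s^2 = 1 - 9*l*m^2) :
    (12 * (3*m - (2/t)*s*a - (3*l*m + 2/(9*m))*a^2) ^ 2 + 4 * a ^ 2
      - 4 * a * (3*t*m/s - ((2 + 9*l*m^2)/s^2)*a + (t*(45*l*m^2 - 1)/(6*m*s^3))*a^2)
      - (2 - 4 * l * (3*m - (2/t)*s*a - (3*l*m + 2/(9*m))*a^2) ^ 2 - (2*l/3)*a^2)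
        * ((3*t*m/s - ((2 + 9*l*m^2)/s^2)*a + (t*(45*l*m^2 - 1)/(6*m*s^3))*a^2) - a) ^ 2)
      - (54*m^2/s^2 - (12*t*m*(2 + 9*l*m^2)/s^3)*a + (18*l*m^2*(20 + 9*l*m^2)/s^4)*a^2)
      = a^3 * (((72:ℝ)*l*a^5 + (1296:ℝ)*m*l*t*s*a^4 + (1863:ℝ)*m^2*a + (20979:ℝ)*m^2*l*a^3 + (-4536:ℝ)*m^2*l^2*a^5 + (9720:ℝ)*m^3*t*s + (12636:ℝ)*m^3*l*t*s*a^2 + (-48600:ℝ)*m^3*l^2*t*s*a^4 + (-370332:ℝ)*m^4*l*a + (-485514:ℝ)*m^4*l^2*a^3 + (-16038:ℝ)*m^4*l^3*a^5 + (-148716:ℝ)*m^5*l*t*s + (428652:ℝ)*m^5*l^2*t*s*a^2 + (-542376:ℝ)*m^5*l^3*t*s*a^4 + (6449463:ℝ)*m^6*l^2*a + (1174419:ℝ)*m^6*l^3*a^3 + (2755620:ℝ)*m^6*l^4*a^5 + (-4172796:ℝ)*m^7*l^2*t*s + (12124728:ℝ)*m^7*l^3*t*s*a^2 + (4723920:ℝ)*m^7*l^4*t*s*a^4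 + (-62001450:ℝ)*m^8*l^3*a + (-19131876:ℝ)*m^8*l^4*a^3 + (26572050:ℝ)*m^8*l^5*a^5 + (17006112:ℝ)*m^9*l^3*t*s + (-59521392:ℝ)*m^9*l^4*t*s*a^2 + (369882936:ℝ)*m^10*l^4*a + (-191318760:ℝ)*m^10*l^5*a^3) / ((1458:ℝ)*m^4*t^2*s^6)) := by
  rw [aux16a m l t s a hm ht0 hs0, aux16b m l t s a ht2 hs2]
  ring
set_option maxHeartbeats 4000000 in
/-- as `a → 0`,
`R''(r_poly(a), β_poly(a), a) - (54M²/S² - (12√3·M·(2 + 9ΛM²)/S³)·a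
  + (18ΛM²·(20 + 9ΛM²)/S⁴)·a²) = O(a³)`. -/


theorem stmt_16 (M Λ : ℝ) (hM : 0 < M) (hΛ : 0 < Λ) (hsub : 9 * Λ * M ^ 2 < 1) :
    (fun a : ℝ =>
        Rpp Λ (rpoly M Λ a) (βpoly M Λ a) a -
          (54 * M ^ 2 / (S M Λ) ^ 2 -
            (12 * Real.sqrt 3 * M * (2 + 9 * Λ * M ^ 2) / (S M Λ) ^ 3) * a +
            (18 * Λ * M ^ 2 * (20 + 9 * Λ * M ^ 2) / (S M Λ) ^ 4) * a ^ 2))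
      =O[nhds 0] fun a : ℝ => a ^ 3 := by
  have hσ : (0:ℝ) < 1 - 9 * Λ * M ^ 2 := by linarith
  have hs2 : S M Λ ^ 2 = 1 - 9 * Λ * M ^ 2 := Real.sq_sqrt hσ.le
  have hs0 : S M Λ ≠ 0 := (Real.sqrt_pos.mpr hσ).ne'
  have ht2 : Real.sqrt 3 ^ 2 = 3 := Real.sq_sqrt (by norm_num)
  have ht0 : Real.sqrt 3 ≠ 0 := (Real.sqrt_pos.mpr (by norm_num)).ne'
  set m := M with hmdef
  set l := Λ with hldef
  set t := Real.sqrt 3 with htdef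
  set s := S M Λ with hsdef
  have key : ∀ a : ℝ,
      Rpp Λ (rpoly M Λ a) (βpoly M Λ a) a -
        (54 * M ^ 2 / s ^ 2 - (12 * t * M * (2 + 9 * Λ * M ^ 2) / s ^ 3) * a +
          (18 * Λ * M ^ 2 * (20 + 9 * Λ * M ^ 2) / s ^ 4) * a ^ 2)
      = a ^ 3 * (((72:ℝ)*l*a^5 + (1296:ℝ)*m*l*t*s*a^4 + (1863:ℝ)*m^2*a + (20979:ℝ)*m^2*l*a^3 + (-4536:ℝ)*m^2*l^2*a^5 + (9720:ℝ)*m^3*t*s + (12636:ℝ)*m^3*l*t*s*a^2 + (-48600:ℝ)*m^3*l^2*t*s*a^4 + (-370332:ℝ)*m^4*l*a + (-485514:ℝ)*m^4*l^2*a^3 + (-16038:ℝ)*m^4*l^3*a^5 + (-148716:ℝ)*m^5*l*t*s + (428652:ℝ)*m^5*l^2*t*s*a^2 + (-542376:ℝ)*m^5*l^3*t*s*a^4 + (6449463:ℝ)*m^6*l^2*a + (1174419:ℝ)*m^6*l^3*a^3 + (2755620:ℝ)*m^6*l^4*a^5 + (-4172796:ℝ)*m^7*l^2*t*s + (12124728:ℝ)*m^7*l^3*t*s*a^2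 + (4723920:ℝ)*m^7*l^4*t*s*a^4 + (-62001450:ℝ)*m^8*l^3*a + (-19131876:ℝ)*m^8*l^4*a^3 + (26572050:ℝ)*m^8*l^5*a^5 + (17006112:ℝ)*m^9*l^3*t*s + (-59521392:ℝ)*m^9*l^4*t*s*a^2 + (369882936:ℝ)*m^10*l^4*a + (-191318760:ℝ)*m^10*l^5*a^3) / ((1458:ℝ)*m^4*t^2*s^6)) := by
    intro a
    have h := aux16 m l t s a hM.ne' ht0 hs0 ht2 hs2
    simp only [Rpp, rpoly, βpoly, ← hsdef, ← htdef]
    convert h using 2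
  have hcont : Continuous (fun a : ℝ => ((72:ℝ)*l*a^5 + (1296:ℝ)*m*l*t*s*a^4 + (1863:ℝ)*m^2*a + (20979:ℝ)*m^2*l*a^3 + (-4536:ℝ)*m^2*l^2*a^5 + (9720:ℝ)*m^3*t*s + (12636:ℝ)*m^3*l*t*s*a^2 + (-48600:ℝ)*m^3*l^2*t*s*a^4 + (-370332:ℝ)*m^4*l*a + (-485514:ℝ)*m^4*l^2*a^3 + (-16038:ℝ)*m^4*l^3*a^5 + (-148716:ℝ)*m^5*l*t*s + (428652:ℝ)*m^5*l^2*t*s*a^2 + (-542376:ℝ)*m^5*l^3*t*s*a^4 + (6449463:ℝ)*m^6*l^2*a + (1174419:ℝ)*m^6*l^3*a^3 + (2755620:ℝ)*m^6*l^4*a^5 + (-4172796:ℝ)*m^7*l^2*t*s + (12124728:ℝ)*m^7*l^3*t*s*a^2 + (4723920:ℝ)*m^7*l^4*t*s*a^4 + (-62001450:ℝ)*m^8*l^3*a + (-19131876:ℝ)*m^8*l^4*a^3 + (26572050:ℝ)*m^8*l^5*a^5 + (17006112:ℝ)*m^9*l^3*t*s + (-59521392:ℝ)*m^9*l^4*t*s*a^2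 + (369882936:ℝ)*m^10*l^4*a + (-191318760:ℝ)*m^10*l^5*a^3) / ((1458:ℝ)*m^4*t^2*s^6)) := by
    fun_prop
  have hbig : (fun a : ℝ => ((72:ℝ)*l*a^5 + (1296:ℝ)*m*l*t*s*a^4 + (1863:ℝ)*m^2*a + (20979:ℝ)*m^2*l*a^3 + (-4536:ℝ)*m^2*l^2*a^5 + (9720:ℝ)*m^3*t*s + (12636:ℝ)*m^3*l*t*s*a^2 + (-48600:ℝ)*m^3*l^2*t*s*a^4 + (-370332:ℝ)*m^4*l*a + (-485514:ℝ)*m^4*l^2*a^3 + (-16038:ℝ)*m^4*l^3*a^5 + (-148716:ℝ)*m^5*l*t*s + (428652:ℝ)*m^5*l^2*t*s*a^2 + (-542376:ℝ)*m^5*l^3*t*s*a^4 + (6449463:ℝ)*m^6*l^2*a + (1174419:ℝ)*m^6*l^3*a^3 + (2755620:ℝ)*m^6*l^4*a^5 + (-4172796:ℝ)*m^7*l^2*t*s + (12124728:ℝ)*m^7*l^3*t*s*a^2 + (4723920:ℝ)*m^7*l^4*t*s*a^4 + (-62001450:ℝ)*m^8*l^3*a + (-19131876:ℝ)*m^8*l^4*a^3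 + (26572050:ℝ)*m^8*l^5*a^5 + (17006112:ℝ)*m^9*l^3*t*s + (-59521392:ℝ)*m^9*l^4*t*s*a^2 + (369882936:ℝ)*m^10*l^4*a + (-191318760:ℝ)*m^10*l^5*a^3) / ((1458:ℝ)*m^4*t^2*s^6))
      =O[nhds 0] (fun _ : ℝ => (1:ℝ)) :=
    (hcont.tendsto 0).isBigO_one ℝ
  have h2 : (fun a : ℝ => a ^ 3 * (((72:ℝ)*l*a^5 + (1296:ℝ)*m*l*t*s*a^4 + (1863:ℝ)*m^2*a + (20979:ℝ)*m^2*l*a^3 + (-4536:ℝ)*m^2*l^2*a^5 + (9720:ℝ)*m^3*t*s + (12636:ℝ)*m^3*l*t*s*a^2 + (-48600:ℝ)*m^3*l^2*t*s*a^4 + (-370332:ℝ)*m^4*l*a + (-485514:ℝ)*m^4*l^2*a^3 + (-16038:ℝ)*m^4*l^3*a^5 + (-148716:ℝ)*m^5*l*t*s + (428652:ℝ)*m^5*l^2*t*s*a^2 + (-542376:ℝ)*m^5*l^3*t*s*a^4 + (6449463:ℝ)*m^6*l^2*a + (1174419:ℝ)*m^6*l^3*a^3 + (2755620:ℝ)*m^6*l^4*a^5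 + (-4172796:ℝ)*m^7*l^2*t*s + (12124728:ℝ)*m^7*l^3*t*s*a^2 + (4723920:ℝ)*m^7*l^4*t*s*a^4 + (-62001450:ℝ)*m^8*l^3*a + (-19131876:ℝ)*m^8*l^4*a^3 + (26572050:ℝ)*m^8*l^5*a^5 + (17006112:ℝ)*m^9*l^3*t*s + (-59521392:ℝ)*m^9*l^4*t*s*a^2 + (369882936:ℝ)*m^10*l^4*a + (-191318760:ℝ)*m^10*l^5*a^3) / ((1458:ℝ)*m^4*t^2*s^6)))
      =O[nhds 0] fun a : ℝ => a ^ 3 := by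
    simpa using (isBigO_refl (fun a : ℝ => a ^ 3) (nhds 0)).mul hbig
  exact h2.congr_left fun a => (key a).symm
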